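/- arXiv:2510.09197 — 2 statements merged into one kernel-verified Lean document; each statement's English description precedes it below -/
import Mathlib

section
/- Let G be a connected finite simple graph on n vertices with smallest independence-polynomial root β := β(G). Then for every integer k with 1 ≤ k ≤ n, the higher derivatives of I(G,z) at β satisfy |I^{(k+1)}(G, β)| ≤ k!·|I'(G, β)|·(n/β^{dia(G)})^k. In other words, Smale's gamma-function of the polynomial I'(G,z) at β is at most n/β^{dia(G)}. -/
open Polynomial

open scoped Classical in
/-- `indPolyOn G A` is the independence polynomial (over `ℝ`) of the subgraph of `G`
induced on the vertex set `A`: the sum of `(-1)^|s| • X^|s|` over all independent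
sets `s ⊆ A` of `G`.  Equivalently it is `∑ k (-1)^k a_k z^k` where `a_k` is the
number of independent sets of size `k` of the induced subgraph `G[A]`. -/
noncomputable def indPolyOn {V : Type*} [Fintype V] (G : SimpleGraph V) (A : Set V) :
    Polynomial ℝ :=
  ∑ s ∈ Finset.univ.filter
      (fun s : Finset V => ↑s ⊆ A ∧ ∀ u ∈ s, ∀ v ∈ s, ¬ G.Adj u v),
    ((-1 : ℝ) ^ s.card) • (X : Polynomial ℝ) ^ s.card

/-- The independence polynomial `I(G,z)` of `G`. -/
noncomputable def indPoly {V : Type*} [Fintype V] (G : SimpleGraph V) : Polynomial ℝ :=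
  indPolyOn G Set.univ


/-!
Write `I_A` for the independence polynomial of the subgraph induced on `A`. The recursion
`I_{A ∪ {v}} = I_A - z · I_{A \ N(v)}` makes `A ↦ I_A(x)` antitone as long as all `I_A(x)` are
nonnegative, and a first-root argument then shows that every `I_A` is nonnegative on `[0, β]`.
Differentiating, `I^{(m)}(β) = (-1)^m m! ∑_T I_{V \ N[T]}(β)` over independent `T` with `|T| = m`.
Applying the recursion once along each edge of a shortest path shows that adding a vertex to `T`
costs at most a factor `β ^ diam`, so every term with `|T| = k + 1` is at most `β ^ (-k · diam)`
times the term of any of its vertices; since at most `n ^ k` of these `T` contain a given vertex,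
double counting gives the bound.
-/

section

theorem ContinuousOn.nonneg_of_forall_Ico_ne_zero {f : ℝ → ℝ} {a b : ℝ} (hab : a ≤ b)
    (hf : ContinuousOn f (Set.Icc a b)) (ha : 0 < f a) (h : ∀ y ∈ Set.Ico a b, f y ≠ 0) :
    0 ≤ f b := by
  by_contra! hb
  obtain ⟨y, hy, hy0⟩ := intermediate_value_Icc' hab hf ⟨hb.le, ha.le⟩
  exact h y ⟨hy.1, hy.2.lt_of_ne fun hyb => hb.ne (hyb ▸ hy0)⟩ hy0

open Finset SimpleGraph

open scoped Classical

variable {V : Type*} [Fintype V] {G : SimpleGraph V}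

theorem card_filter_mem_le_card_pow {k : ℕ} {𝒜 : Finset (Finset V)}
    (h𝒜 : ∀ T ∈ 𝒜, #T = k + 1) (u : V) : #{T ∈ 𝒜 | u ∈ T} ≤ Fintype.card V ^ k := by
  have hinj : #{T ∈ 𝒜 | u ∈ T} ≤ #(powersetCard k (univ : Finset V)) := by
    refine card_le_card_of_injOn (·.erase u) (fun T hT => ?_) (fun T₁ h₁ T₂ h₂ h => ?_)
    · rw [mem_coe, mem_filter] at hT
      rw [mem_coe, mem_powersetCard, card_erase_of_mem hT.2, h𝒜 T hT.1]
      exact ⟨subset_univ _, rfl⟩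
    · rw [mem_coe, mem_filter] at h₁ h₂
      rw [← insert_erase h₁.2, ← insert_erase h₂.2]
      exact congrArg (insert u) h
  rw [card_powersetCard, card_univ] at hinj
  exact hinj.trans (Nat.choose_le_pow _ _)

theorem sum_sum_le_card_pow_mul_sum {k : ℕ} {𝒜 : Finset (Finset V)}
    (h𝒜 : ∀ T ∈ 𝒜, #T = k + 1) {f : V → ℝ} (hf : ∀ u, 0 ≤ f u) :
    ∑ T ∈ 𝒜, ∑ u ∈ T, f u ≤ (Fintype.card V : ℝ) ^ k * ∑ u, f u :=
  calc ∑ T ∈ 𝒜, ∑ u ∈ T, f u = ∑ u, (#{T ∈ 𝒜 | u ∈ T} : ℝ) * f u := by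
        rw [sum_comm' (t' := univ) (s' := fun u => {T ∈ 𝒜 | u ∈ T}) (by simp)]
        simp only [sum_const, nsmul_eq_mul]
    _ ≤ ∑ u, (Fintype.card V : ℝ) ^ k * f u :=
        sum_le_sum fun u _ =>
          mul_le_mul_of_nonneg_right (mod_cast card_filter_mem_le_card_pow h𝒜 u) (hf u)
    _ = (Fintype.card V : ℝ) ^ k * ∑ u, f u := (mul_sum _ _ _).symm

omit [Fintype V] in
theorem isIndepSet_coe_iff {s : Finset V} :
    G.IsIndepSet (s : Set V) ↔ ∀ u ∈ s, ∀ v ∈ s, ¬ G.Adj u v :=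
  ⟨fun h _ hu _ hv huv => h hu hv huv.ne huv, fun h _ hu _ hv _ => h _ hu _ hv⟩

noncomputable def indepSubsets (G : SimpleGraph V) (A : Finset V) : Finset (Finset V) :=
  A.powerset.filter fun s => G.IsIndepSet (s : Set V)

omit [Fintype V] in
theorem mem_indepSubsets {A s : Finset V} :
    s ∈ indepSubsets G A ↔ s ⊆ A ∧ G.IsIndepSet (s : Set V) := by
  rw [indepSubsets, mem_filter, mem_powerset]

theorem indPolyOn_coe_eq_sum (A : Finset V) :
    indPolyOn G ↑A = ∑ s ∈ indepSubsets G A, (-1 : ℝ) ^ #s • (X : ℝ[X]) ^ #s := by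
  rw [indPolyOn]
  refine sum_congr ?_ fun _ _ => rfl
  ext s
  simp [mem_indepSubsets, isIndepSet_coe_iff]

theorem eval_indPolyOn (A : Finset V) (x : ℝ) :
    (indPolyOn G ↑A).eval x = ∑ s ∈ indepSubsets G A, (-x) ^ #s := by
  simp [indPolyOn_coe_eq_sum, eval_finsetSum, neg_pow x]

theorem eval_indPolyOn_insert {A : Finset V} {v : V} (hv : v ∉ A) (x : ℝ) :
    (indPolyOn G ↑(insert v A)).eval x =
      (indPolyOn G ↑A).eval x - x * (indPolyOn G ↑{w ∈ A | ¬ G.Adj v w}).eval x := by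
  have hindep : {t ∈ A.powerset | G.IsIndepSet (insert v t : Finset V)} =
      indepSubsets G {w ∈ A | ¬ G.Adj v w} := by
    ext t
    simp only [mem_filter, mem_powerset, mem_indepSubsets, coe_insert, Set.pairwise_insert,
      subset_iff, mem_coe]
    grind [G.adj_symm]
  have hcontaining : ∑ t ∈ A.powerset, (if G.IsIndepSet (insert v t : Finset V)
      then (-x) ^ #(insert v t) else 0) =
        -x * ∑ t ∈ indepSubsets G {w ∈ A | ¬ G.Adj v w}, (-x) ^ #t := by
    rw [← hindep, mul_sum, sum_filter]
    refine sum_congr rfl fun t ht => ?_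
    rw [card_insert_of_notMem fun hvt => hv (mem_powerset.1 ht hvt), pow_succ']
  rw [eval_indPolyOn, eval_indPolyOn, eval_indPolyOn, sub_eq_add_neg, ← neg_mul, ← hcontaining,
    indepSubsets, indepSubsets, sum_filter, sum_filter, sum_powerset_insert hv]

theorem indPoly_eq_indPolyOn_univ : indPoly G = indPolyOn G ↑(univ : Finset V) := by
  rw [indPoly, coe_univ]

theorem eval_indPolyOn_pos_of_nonpos {x : ℝ} (hx : x ≤ 0) (A : Finset V) :
    0 < (indPolyOn G ↑A).eval x := by
  have hempty : ∅ ∈ indepSubsets G A := mem_indepSubsets.2 ⟨empty_subset A, by simp⟩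
  rw [eval_indPolyOn]
  calc (0 : ℝ) < (-x) ^ #(∅ : Finset V) := by simp
    _ ≤ _ := single_le_sum (fun s _ => pow_nonneg (neg_nonneg.2 hx) #s) hempty

theorem eval_indPolyOn_singleton (v : V) (x : ℝ) :
    (indPolyOn G ↑({v} : Finset V)).eval x = 1 - x := by
  rw [← insert_empty, eval_indPolyOn_insert (notMem_empty v), filter_empty, eval_indPolyOn]
  simp [indepSubsets, filter_singleton]

theorem pos_of_eval_indPoly_eq_zero {β : ℝ} (hroot : (indPoly G).eval β = 0) : 0 < β := by
  by_contra! hβ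
  exact (eval_indPolyOn_pos_of_nonpos hβ univ).ne'
    (indPoly_eq_indPolyOn_univ (G := G) ▸ hroot)

theorem antitone_eval_indPolyOn {x : ℝ} (hx : 0 ≤ x)
    (hnn : ∀ C : Finset V, 0 ≤ (indPolyOn G ↑C).eval x) :
    Antitone fun A : Finset V => (indPolyOn G ↑A).eval x :=
  antitone_iff_forall_insert_le.2 fun A v hv => by
    rw [eval_indPolyOn_insert hv]
    linarith [mul_nonneg hx (hnn {w ∈ A | ¬ G.Adj v w})]

theorem le_of_eval_indPoly_nonpos {β x : ℝ} (hmin : ∀ y : ℝ, (indPoly G).eval y = 0 → β ≤ y)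
    (hx : 0 ≤ x) (hneg : (indPoly G).eval x ≤ 0) : β ≤ x := by
  have hpos : 0 < (indPoly G).eval 0 :=
    indPoly_eq_indPolyOn_univ (G := G) ▸ eval_indPolyOn_pos_of_nonpos le_rfl univ
  obtain ⟨y, hy, hy0⟩ :=
    intermediate_value_Icc' hx (indPoly G).continuous.continuousOn ⟨hneg, hpos.le⟩
  exact (hmin y hy0).trans hy.2

theorem eval_indPolyOn_nonneg {β : ℝ} (hroot : (indPoly G).eval β = 0)
    (hmin : ∀ x : ℝ, (indPoly G).eval x = 0 → β ≤ x) (A : Finset V) :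
    0 ≤ (indPolyOn G ↑A).eval β := by
  set Z : Set ℝ := {y | 0 ≤ y ∧ ∃ B : Finset V, (indPolyOn G ↑B).eval y = 0}
  have hZ : IsClosed Z := by
    simp only [Z, Set.ofPred_and, Set.ofPred_exists]
    exact isClosed_Ici.inter (isClosed_iUnion_of_finite fun B =>
      isClosed_eq (Polynomial.continuous _) continuous_const)
  have hβ : 0 ≤ β := (pos_of_eval_indPoly_eq_zero hroot).le
  have hbdd : BddBelow Z := ⟨0, fun y hy => hy.1⟩
  obtain ⟨hm, B, hB⟩ : sInf Z ∈ Z :=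
    hZ.csInf_mem ⟨β, hβ, univ, indPoly_eq_indPolyOn_univ (G := G) ▸ hroot⟩ hbdd
  have hno_root : ∀ C : Finset V, ∀ y ∈ Set.Ico 0 (sInf Z), (indPolyOn G ↑C).eval y ≠ 0 :=
    fun C y hy hy0 => (csInf_le hbdd ⟨hy.1, C, hy0⟩).not_gt hy.2
  have hnn : ∀ C : Finset V, 0 ≤ (indPolyOn G ↑C).eval (sInf Z) := fun C =>
    (Polynomial.continuousOn _).nonneg_of_forall_Ico_ne_zero hm
      (eval_indPolyOn_pos_of_nonpos le_rfl C) (hno_root C)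
  have hβm : β ≤ sInf Z := by
    refine le_of_eval_indPoly_nonpos hmin hm ?_
    rw [indPoly_eq_indPolyOn_univ, ← hB]
    exact antitone_eval_indPolyOn hm hnn (subset_univ B)
  exact (Polynomial.continuousOn _).nonneg_of_forall_Ico_ne_zero hβ
    (eval_indPolyOn_pos_of_nonpos le_rfl A)
    fun y hy => hno_root A y ⟨hy.1, hy.2.trans_le hβm⟩

theorem mul_eval_indPolyOn_filter_le {A : Finset V} {v : V} (hv : v ∉ A) {x : ℝ}
    (h : 0 ≤ (indPolyOn G ↑(insert v A)).eval x) :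
    x * (indPolyOn G ↑{w ∈ A | ¬ G.Adj v w}).eval x ≤ (indPolyOn G ↑A).eval x := by
  rw [eval_indPolyOn_insert hv] at h
  linarith

theorem pow_length_mul_eval_erase_le {β : ℝ} (hβ0 : 0 ≤ β) (hβ1 : β ≤ 1)
    (hnn : ∀ C : Finset V, 0 ≤ (indPolyOn G ↑C).eval β) {w z : V} (p : G.Walk w z)
    {A : Finset V} (hw : w ∈ A) (hz : z ∉ A) :
    β ^ p.length * (indPolyOn G ↑(A.erase w)).eval β ≤ (indPolyOn G ↑A).eval β := by
  induction p generalizing A with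
  | nil => exact absurd hw hz
  | @cons w y z hadj q ih =>
    have hfilter : ∀ B ⊆ A, {x ∈ B | ¬ G.Adj y x} ⊆ A.erase w := fun B hB x hx => by
      rw [mem_filter] at hx
      exact mem_erase.2 ⟨fun hxw => hx.2 (hxw ▸ hadj.symm), hB hx.1⟩
    have hmono := antitone_eval_indPolyOn hβ0 hnn
    rw [Walk.length_cons]
    by_cases hy : y ∈ A
    · have hrec := eval_indPolyOn_insert (G := G) (notMem_erase y A) β
      rw [insert_erase hy] at hrec
      have hq : 0 ≤ β ^ q.length := pow_nonneg hβ0 _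
      calc β ^ (q.length + 1) * (indPolyOn G ↑(A.erase w)).eval β
          = β ^ q.length * (β * (indPolyOn G ↑(A.erase w)).eval β) := by ring
        _ ≤ β ^ q.length * (β * (indPolyOn G ↑{x ∈ A.erase y | ¬ G.Adj y x}).eval β) := by
          gcongr
          exact hmono (hfilter _ (erase_subset y A))
        _ = β ^ q.length * (indPolyOn G ↑(A.erase y)).eval β
              - β ^ q.length * (indPolyOn G ↑A).eval β := by
          rw [hrec]; ring
        _ ≤ (indPolyOn G ↑A).eval β := by
          nlinarith [ih hy hz, hnn A, pow_le_one₀ hβ0 hβ1 (n := q.length)]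
    · calc β ^ (q.length + 1) * (indPolyOn G ↑(A.erase w)).eval β
          ≤ β * (indPolyOn G ↑(A.erase w)).eval β :=
          mul_le_mul_of_nonneg_right (pow_le_of_le_one hβ0 hβ1 q.length.succ_ne_zero) (hnn _)
        _ ≤ β * (indPolyOn G ↑{x ∈ A | ¬ G.Adj y x}).eval β := by
          gcongr
          exact hmono (hfilter A subset_rfl)
        _ ≤ (indPolyOn G ↑A).eval β := mul_eval_indPolyOn_filter_le hy (hnn _)

noncomputable def closedNbhdCompl (G : SimpleGraph V) (T : Finset V) : Finset V :=
  {x | ∀ t ∈ T, x ≠ t ∧ ¬ G.Adj t x}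

theorem mem_closedNbhdCompl {T : Finset V} {x : V} :
    x ∈ closedNbhdCompl G T ↔ ∀ t ∈ T, x ≠ t ∧ ¬ G.Adj t x := by
  simp [closedNbhdCompl]

theorem closedNbhdCompl_insert (T : Finset V) (w : V) :
    closedNbhdCompl G (insert w T) = {x ∈ (closedNbhdCompl G T).erase w | ¬ G.Adj w x} := by
  ext x
  simp only [mem_closedNbhdCompl, mem_filter, mem_erase, forall_mem_insert]
  tauto

theorem pow_diam_mul_eval_closedNbhdCompl_insert_le (hG : G.Connected) {β : ℝ} (hβ0 : 0 ≤ β)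
    (hβ1 : β ≤ 1) (hnn : ∀ C : Finset V, 0 ≤ (indPolyOn G ↑C).eval β) {T : Finset V}
    {u w : V} (hu : u ∈ T) (hw : w ∈ closedNbhdCompl G T) :
    β ^ G.diam * (indPolyOn G ↑(closedNbhdCompl G (insert w T))).eval β ≤
      (indPolyOn G ↑(closedNbhdCompl G T)).eval β := by
  have : Nonempty V := hG.nonempty
  obtain ⟨p, hp⟩ := hG.exists_walk_length_eq_dist u w
  cases p with
  | nil => exact absurd rfl (mem_closedNbhdCompl.1 hw u hu).1
  | @cons _ y _ hadj q =>
    -- the first edge of a shortest path from `u` already leaves `closedNbhdCompl G T`,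
    -- which saves one factor `β`
    have hy : y ∉ closedNbhdCompl G T := fun hy => (mem_closedNbhdCompl.1 hy u hu).2 hadj
    have hlen : q.reverse.length + 1 ≤ G.diam := by
      rw [Walk.length_reverse, ← Walk.length_cons hadj, hp]
      exact dist_le_diam (G.connected_iff_ediam_ne_top.1 hG)
    calc β ^ G.diam * (indPolyOn G ↑(closedNbhdCompl G (insert w T))).eval β
        ≤ β ^ q.reverse.length *
            (β * (indPolyOn G ↑(closedNbhdCompl G (insert w T))).eval β) := by
          rw [← mul_assoc, ← pow_succ]
          exact mul_le_mul_of_nonneg_right (pow_le_pow_of_le_one hβ0 hβ1 hlen) (hnn _)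
      _ ≤ β ^ q.reverse.length * (indPolyOn G ↑((closedNbhdCompl G T).erase w)).eval β := by
          rw [closedNbhdCompl_insert]
          gcongr
          exact mul_eval_indPolyOn_filter_le (notMem_erase w _) (hnn _)
      _ ≤ (indPolyOn G ↑(closedNbhdCompl G T)).eval β :=
          pow_length_mul_eval_erase_le hβ0 hβ1 hnn q.reverse hw hy

theorem pow_mul_eval_closedNbhdCompl_le (hG : G.Connected) {β : ℝ} (hβ0 : 0 ≤ β)
    (hβ1 : β ≤ 1) (hnn : ∀ C : Finset V, 0 ≤ (indPolyOn G ↑C).eval β) {u : V}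
    (S : Finset V) (huS : u ∉ S) (hS : G.IsIndepSet ((insert u S : Finset V) : Set V)) :
    β ^ (G.diam * #S) * (indPolyOn G ↑(closedNbhdCompl G (insert u S))).eval β ≤
      (indPolyOn G ↑(closedNbhdCompl G {u})).eval β := by
  induction S using Finset.induction_on with
  | empty => simp
  | insert w S hwS ih =>
    rw [isIndepSet_coe_iff] at hS
    have hw : w ∈ closedNbhdCompl G (insert u S) := by
      simp only [mem_closedNbhdCompl, forall_mem_insert]
      grind
    calc β ^ (G.diam * #(insert w S)) *
          (indPolyOn G ↑(closedNbhdCompl G (insert u (insert w S)))).eval β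
        = β ^ (G.diam * #S) *
          (β ^ G.diam * (indPolyOn G ↑(closedNbhdCompl G (insert w (insert u S)))).eval β) := by
          rw [card_insert_of_notMem hwS, insert_comm, mul_add_one, pow_add]
          ring
      _ ≤ β ^ (G.diam * #S) * (indPolyOn G ↑(closedNbhdCompl G (insert u S))).eval β := by
          gcongr
          exact pow_diam_mul_eval_closedNbhdCompl_insert_le hG hβ0 hβ1 hnn
            (mem_insert_self u S) hw
      _ ≤ (indPolyOn G ↑(closedNbhdCompl G {u})).eval β := by
          refine ih (fun h => huS (mem_insert_of_mem h)) ?_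
          rw [isIndepSet_coe_iff]
          grind

theorem sum_indepSubsets_superset {T : Finset V} (hT : G.IsIndepSet (T : Set V))
    (f : Finset V → ℝ) :
    ∑ s ∈ indepSubsets G univ with T ⊆ s, f s =
      ∑ s ∈ indepSubsets G (closedNbhdCompl G T), f (s ∪ T) := by
  rw [isIndepSet_coe_iff] at hT
  refine sum_nbij' (· \ T) (· ∪ T) ?_ ?_ ?_ ?_ ?_
  · intro s hs
    simp only [mem_filter, mem_indepSubsets, isIndepSet_coe_iff] at hs
    simp only [mem_indepSubsets, isIndepSet_coe_iff, subset_iff, mem_closedNbhdCompl,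
      mem_sdiff]
    grind
  · intro s hs
    simp only [mem_indepSubsets, isIndepSet_coe_iff, subset_iff, mem_closedNbhdCompl] at hs
    simp only [mem_filter, mem_indepSubsets, isIndepSet_coe_iff, mem_union]
    grind [G.adj_symm]
  · intro s hs
    exact sdiff_union_of_subset (mem_filter.1 hs).2
  · intro s hs
    refine union_sdiff_cancel_right (disjoint_left.2 fun x hx hxT => ?_)
    exact (mem_closedNbhdCompl.1 ((mem_indepSubsets.1 hs).1 hx) x hxT).1 rfl
  · intro s hs
    rw [sdiff_union_of_subset (mem_filter.1 hs).2]

theorem eval_iterate_derivative_indPoly (m : ℕ) (x : ℝ) :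
    (derivative^[m] (indPoly G)).eval x =
      (-1) ^ m * m.factorial *
        ∑ T ∈ G.indepSetFinset m, (indPolyOn G ↑(closedNbhdCompl G T)).eval x := by
  have hderiv : (derivative^[m] (indPoly G)).eval x = ∑ s ∈ indepSubsets G univ,
      ∑ _T ∈ s.powersetCard m, (-1) ^ #s * (m.factorial : ℝ) * x ^ (#s - m) := by
    rw [indPoly_eq_indPolyOn_univ, indPolyOn_coe_eq_sum, iterate_derivative_sum, eval_finsetSum]
    refine sum_congr rfl fun s _ => ?_
    rw [iterate_derivative_smul, iterate_derivative_X_pow_eq_smul, sum_const, card_powersetCard,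
      Nat.descFactorial_eq_factorial_mul_choose]
    simp only [eval_smul, eval_pow, eval_X, smul_eq_mul, nsmul_eq_mul, Nat.cast_mul]
    ring
  rw [hderiv, sum_comm' (t' := G.indepSetFinset m)
    (s' := fun T => {s ∈ indepSubsets G univ | T ⊆ s}), mul_sum]
  · refine sum_congr rfl fun T hT => ?_
    obtain ⟨hTind, hTcard⟩ := mem_indepSetFinset_iff.1 hT
    rw [sum_indepSubsets_superset hTind, eval_indPolyOn, mul_sum]
    refine sum_congr rfl fun s hs => ?_
    have hdisj : Disjoint s T := disjoint_left.2 fun x hx hxT =>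
      (mem_closedNbhdCompl.1 ((mem_indepSubsets.1 hs).1 hx) x hxT).1 rfl
    rw [card_union_of_disjoint hdisj, hTcard, Nat.add_sub_cancel, pow_add, neg_pow x]
    ring
  · intro s T
    simp only [mem_indepSubsets, mem_powersetCard, mem_indepSetFinset_iff, isNIndepSet_iff,
      mem_filter]
    exact ⟨fun ⟨hs, hTs, hT⟩ => ⟨⟨hs, hTs⟩, hs.2.mono (coe_subset.2 hTs), hT⟩,
      fun ⟨⟨hs, hTs⟩, _, hT⟩ => ⟨hs, hTs, hT⟩⟩

theorem abs_eval_iterate_derivative_indPoly {x : ℝ}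
    (hnn : ∀ C : Finset V, 0 ≤ (indPolyOn G ↑C).eval x) (m : ℕ) :
    |(derivative^[m] (indPoly G)).eval x| =
      m.factorial * ∑ T ∈ G.indepSetFinset m, (indPolyOn G ↑(closedNbhdCompl G T)).eval x := by
  rw [eval_iterate_derivative_indPoly, abs_mul, abs_mul, abs_pow, abs_neg, abs_one, one_pow,
    one_mul, Nat.abs_cast, abs_of_nonneg (sum_nonneg fun T _ => hnn _)]

theorem sum_indepSetFinset_one (f : Finset V → ℝ) :
    ∑ T ∈ G.indepSetFinset 1, f T = ∑ u, f {u} := by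
  have : G.indepSetFinset 1 = univ.map ⟨singleton, singleton_injective⟩ := by
    ext T
    simp only [mem_indepSetFinset_iff, isNIndepSet_iff, card_eq_one, mem_map, mem_univ,
      true_and, Function.Embedding.coeFn_mk]
    constructor
    · exact fun ⟨_, u, hu⟩ => ⟨u, hu.symm⟩
    · rintro ⟨u, rfl⟩
      exact ⟨by simp, u, rfl⟩
  rw [this, sum_map]
  rfl

theorem pow_mul_eval_closedNbhdCompl_le_of_mem (hG : G.Connected) {β : ℝ} (hβ0 : 0 ≤ β)
    (hβ1 : β ≤ 1) (hnn : ∀ C : Finset V, 0 ≤ (indPolyOn G ↑C).eval β) {k : ℕ} {T : Finset V}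
    (hT : T ∈ G.indepSetFinset (k + 1)) {u : V} (hu : u ∈ T) :
    β ^ (G.diam * k) * (indPolyOn G ↑(closedNbhdCompl G T)).eval β ≤
      (indPolyOn G ↑(closedNbhdCompl G {u})).eval β := by
  obtain ⟨hTind, hTcard⟩ := mem_indepSetFinset_iff.1 hT
  have := pow_mul_eval_closedNbhdCompl_le hG hβ0 hβ1 hnn (T.erase u) (notMem_erase u T)
    (by rwa [insert_erase hu])
  rwa [insert_erase hu, card_erase_of_mem hu, hTcard, Nat.add_sub_cancel] at this

theorem pow_mul_sum_indepSetFinset_le (hG : G.Connected) {β : ℝ} (hβ0 : 0 ≤ β) (hβ1 : β ≤ 1)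
    (hnn : ∀ C : Finset V, 0 ≤ (indPolyOn G ↑C).eval β) (k : ℕ) :
    β ^ (G.diam * k) * ((k + 1) *
        ∑ T ∈ G.indepSetFinset (k + 1), (indPolyOn G ↑(closedNbhdCompl G T)).eval β) ≤
      (Fintype.card V : ℝ) ^ k * ∑ u, (indPolyOn G ↑(closedNbhdCompl G {u})).eval β := by
  set J : Finset V → ℝ := fun T => (indPolyOn G ↑(closedNbhdCompl G T)).eval β
  calc β ^ (G.diam * k) * ((k + 1) * ∑ T ∈ G.indepSetFinset (k + 1), J T)
      = ∑ T ∈ G.indepSetFinset (k + 1), ∑ _u ∈ T, β ^ (G.diam * k) * J T := by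
        rw [mul_sum, mul_sum]
        refine sum_congr rfl fun T hT => ?_
        rw [sum_const, (mem_indepSetFinset_iff.1 hT).card_eq, nsmul_eq_mul]
        push_cast
        ring
    _ ≤ ∑ T ∈ G.indepSetFinset (k + 1), ∑ u ∈ T, J {u} := sum_le_sum fun T hT =>
        sum_le_sum fun u hu => pow_mul_eval_closedNbhdCompl_le_of_mem hG hβ0 hβ1 hnn hT hu
    _ ≤ (Fintype.card V : ℝ) ^ k * ∑ u, J {u} :=
        sum_sum_le_card_pow_mul_sum (fun T hT => (mem_indepSetFinset_iff.1 hT).card_eq)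
          fun u => hnn _

end

/-- For a connected graph `G` on `n` vertices with smallest
independence-polynomial root `β := β(G)` and every `1 ≤ k ≤ n`,
`|I^{(k+1)}(G,β)| ≤ k!·|I'(G,β)|·(n/β^{dia(G)})^k`; i.e. Smale's gamma-function of
`I'(G,z)` at `β` is at most `n/β^{dia(G)}`. -/
theorem gamma_of_deriv_indPoly_bound {V : Type*} [Fintype V]
    (G : SimpleGraph V) (hG : G.Connected)
    (β : ℝ) (hroot : (indPoly G).eval β = 0)
    (hmin : ∀ x : ℝ, (indPoly G).eval x = 0 → β ≤ x) :
    ∀ k : ℕ, 1 ≤ k → k ≤ Fintype.card V →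
      |(derivative^[k + 1] (indPoly G)).eval β| ≤
        (k.factorial : ℝ) * |(derivative (indPoly G)).eval β| *
          ((Fintype.card V : ℝ) / β ^ G.diam) ^ k := by
  classical
  intro k _ _
  obtain ⟨v⟩ := hG.nonempty
  have hnn : ∀ A : Finset V, 0 ≤ (indPolyOn G ↑A).eval β := eval_indPolyOn_nonneg hroot hmin
  have hβ0 : 0 < β := pos_of_eval_indPoly_eq_zero hroot
  have hβ1 : β ≤ 1 := by linarith [eval_indPolyOn_singleton (G := G) v β ▸ hnn {v}]
  have hderiv := abs_eval_iterate_derivative_indPoly hnn 1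
  rw [Function.iterate_one, sum_indepSetFinset_one, Nat.factorial_one, Nat.cast_one,
    one_mul] at hderiv
  rw [abs_eval_iterate_derivative_indPoly hnn, hderiv, div_pow, ← pow_mul, mul_div_assoc',
    le_div_iff₀ (pow_pos hβ0 _)]
  set J : Finset V → ℝ := fun T => (indPolyOn G ↑(closedNbhdCompl G T)).eval β
  calc ((k + 1).factorial : ℝ) * (∑ T ∈ G.indepSetFinset (k + 1), J T) * β ^ (G.diam * k)
      = k.factorial *
          (β ^ (G.diam * k) * ((k + 1) * ∑ T ∈ G.indepSetFinset (k + 1), J T)) := by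
        push_cast [Nat.factorial_succ]
        ring
    _ ≤ k.factorial * ((Fintype.card V : ℝ) ^ k * ∑ u, J {u}) :=
        mul_le_mul_of_nonneg_left (pow_mul_sum_indepSetFinset_le hG hβ0.le hβ1 hnn k)
          (Nat.cast_nonneg _)
    _ = k.factorial * (∑ u, J {u}) * (Fintype.card V : ℝ) ^ k := by ring
end

section
/- Let n ≥ 3 and let C_n denote the cycle graph on n vertices. Then the set of complex roots of the independence polynomial I(C_n, z) is exactly { 1/(4·cos²((2k+1)π/(2n))) : k a nonnegative integer with 2k+1 < n }. In particular the smallest root is β(C_n) = 1/(4·cos²(π/(2n))) and the root of second smallest absolute value is 1/(4·cos²(3π/(2n))) (for n ≥ 4). -/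
/-!
Deleting a vertex of `C_n` together with its closed neighbourhood gives
`I(C_n) = I(P_{n-1}) - z I(P_{n-3})`, where the path polynomials obey
`I(P_{m+2}) = I(P_{m+1}) - z I(P_m)`. Under `z = 1 / (4 cos² θ)` this is the Chebyshev
recurrence `sin θ (2 cos θ)^(m+1) I(P_m, z) = sin ((m + 2) θ)`, whence
`(2 cos θ)^n I(C_n, z) = 2 cos (n θ)`. So the `⌊n/2⌋` numbers `1 / (4 cos² ((2k+1)π/(2n)))`,
`2k + 1 < n`, are roots; they are distinct, increasing in `k`, and `deg I(C_n) ≤ ⌊n/2⌋`, so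
there are no others.
-/

open Polynomial

open Real

section IndependencePolynomial

variable {V : Type*} [Fintype V] (G : SimpleGraph V)

lemma indPolyOn_empty : indPolyOn G ∅ = 1 := by
  classical
  have h : Finset.univ.filter (fun s : Finset V => ↑s ⊆ (∅ : Set V) ∧
      ∀ u ∈ s, ∀ w ∈ s, ¬ G.Adj u w) = {∅} := by
    ext s
    simp +contextual [Finset.eq_empty_iff_forall_notMem, Set.subset_def]
  rw [indPolyOn, h, Finset.sum_singleton]
  simp

/-- Deletion–contraction at `v`: an independent set either avoids `v`, or contains `v` and
nothing else of its closed neighbourhood. -/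
lemma indPolyOn_eq_sub {A : Set V} {v : V} (hv : v ∈ A) :
    indPolyOn G A =
      indPolyOn G (A \ {v}) - X * indPolyOn G (A \ insert v (G.neighborSet v)) := by
  classical
  unfold indPolyOn
  rw [← Finset.sum_filter_not_add_sum_filter _ (v ∈ ·), sub_eq_add_neg, neg_mul_eq_neg_mul,
    Finset.mul_sum, Finset.filter_filter]
  congr 1
  · refine Finset.sum_congr (Finset.filter_congr fun s _ => ?_) fun _ _ => rfl
    simp only [Set.subset_sdiff, Set.disjoint_singleton_right, Finset.mem_coe]
    tauto
  · refine Finset.sum_nbij' (·.erase v) (insert v ·) ?_ ?_ ?_ ?_ ?_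
    · simp only [Finset.mem_filter, Finset.mem_univ, true_and]
      rintro s ⟨⟨hsA, hs⟩, hvs⟩
      refine ⟨fun u hu => ?_, fun u hu w hw => hs u (Finset.mem_of_mem_erase hu) w
        (Finset.mem_of_mem_erase hw)⟩
      obtain ⟨huv, hu⟩ := Finset.mem_erase.mp hu
      exact ⟨hsA hu, by simpa [huv] using hs v hvs u hu⟩
    · simp only [Finset.mem_filter, Finset.mem_univ, true_and]
      rintro t ⟨htA, ht⟩
      have hnbr : ∀ u ∈ t, u ≠ v ∧ ¬ G.Adj v u := fun u hu => by
        simpa [not_or] using (htA hu).2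
      refine ⟨⟨?_, ?_⟩, Finset.mem_insert_self v t⟩
      · rw [Finset.coe_insert, Set.insert_subset_iff]
        exact ⟨hv, fun u hu => (htA hu).1⟩
      · simp only [Finset.mem_insert]
        rintro u (rfl | hu) w (rfl | hw)
        exacts [G.irrefl, (hnbr w hw).2, fun h => (hnbr u hu).2 h.symm, ht u hu w hw]
    · intro s hs
      exact Finset.insert_erase (Finset.mem_filter.mp hs).2
    · intro t ht
      refine Finset.erase_insert fun hvt => ?_
      simpa using ((Finset.mem_filter.mp ht).2.1 hvt).2
    · intro s hs
      rw [← Finset.card_erase_add_one (Finset.mem_filter.mp hs).2]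
      simp only [smul_eq_C_mul, map_pow, map_neg, map_one]
      ring

end IndependencePolynomial

/-- The independence polynomial `I(P_m)` of the path on `m` vertices; any arc of `m` vertices of
a cycle that avoids the vertex `0` realises it (`indPolyOn_cycleGraph_arc`). -/
noncomputable def pathIndPoly : ℕ → ℝ[X]
  | 0 => 1
  | 1 => 1 - X
  | m + 2 => pathIndPoly (m + 1) - X * pathIndPoly m

lemma natDegree_pathIndPoly_le (m : ℕ) : (pathIndPoly m).natDegree ≤ (m + 1) / 2 := by
  induction m using Nat.twoStepInduction with
  | zero => simp [pathIndPoly]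
  | one => exact (natDegree_sub_le _ _).trans (by simp)
  | more m ih₀ ih₁ =>
    have hX : (X * pathIndPoly m).natDegree ≤ 1 + (m + 1) / 2 :=
      natDegree_mul_le.trans (by simpa using ih₀)
    exact (natDegree_sub_le _ _).trans (by omega)

lemma eval_zero_pathIndPoly (m : ℕ) : (pathIndPoly m).eval 0 = 1 := by
  induction m using Nat.twoStepInduction with
  | zero | one => simp [pathIndPoly]
  | more m _ ih₁ => simp [pathIndPoly, ih₁]

lemma sin_mul_eval_pathIndPoly {θ z : ℝ} (hz : 4 * cos θ ^ 2 * z = 1) (m : ℕ) :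
    sin θ * (2 * cos θ) ^ (m + 1) * (pathIndPoly m).eval z =
      sin ((m + 2) * θ) := by
  induction m using Nat.twoStepInduction with
  | zero =>
    simp only [pathIndPoly, eval_one, CharP.cast_eq_zero, zero_add, Real.sin_two_mul]
    ring
  | one =>
    simp only [pathIndPoly, eval_sub, eval_one, eval_X, Nat.cast_one]
    rw [show (1 + 2 : ℝ) * θ = 3 * θ by ring, Real.sin_three_mul]
    linear_combination (-sin θ) * hz + 4 * sin θ * Real.sin_sq_add_cos_sq θ
  | more m ih₀ ih₁ =>
    have hsin : sin ((m + 4) * θ) =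
        2 * cos θ * sin ((m + 3) * θ) - sin ((m + 2) * θ) := by
      rw [show (m + 4) * θ = (m + 3) * θ + θ by ring,
        show (m + 2) * θ = (m + 3) * θ - θ by ring, Real.sin_add, Real.sin_sub]
      ring
    simp only [pathIndPoly, eval_sub, eval_mul, eval_X, Nat.cast_add, Nat.cast_ofNat,
      Nat.cast_one] at ih₁ ⊢
    rw [show (m : ℝ) + 2 + 2 = m + 4 by ring]
    rw [show (m : ℝ) + 1 + 2 = m + 3 by ring] at ih₁
    linear_combination 2 * cos θ * ih₁ - hsin - ih₀
      - sin θ * (2 * cos θ) ^ (m + 1) * (pathIndPoly m).eval z * hz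

lemma cycleGraph_adj_iff_val {n : ℕ} (hn : 2 ≤ n) {u v : Fin n} :
    (SimpleGraph.cycleGraph n).Adj u v ↔
      u.val + 1 = v.val ∨ v.val + 1 = u.val ∨ (u.val = 0 ∧ v.val = n - 1) ∨
        (v.val = 0 ∧ u.val = n - 1) := by
  have hsub : ∀ a b : Fin n,
      (a - b).val = 1 ↔ a.val = b.val + 1 ∨ (a.val = 0 ∧ b.val = n - 1) := by
    intro a b
    rw [Fin.val_sub]
    rcases lt_or_ge (n - b.val + a.val) n with h | h
    · rw [Nat.mod_eq_of_lt h]; omega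
    · rw [Nat.mod_eq_sub_mod h, Nat.mod_eq_of_lt (by omega)]; omega
  rw [SimpleGraph.cycleGraph_adj', hsub, hsub]
  omega

lemma indPolyOn_cycleGraph_arc {n a : ℕ} (ha : 0 < a) (m : ℕ) (hm : a + m ≤ n) :
    indPolyOn (SimpleGraph.cycleGraph n) {v | a ≤ v.val ∧ v.val < a + m} = pathIndPoly m := by
  induction m using Nat.twoStepInduction with
  | zero =>
    rw [show {v : Fin n | a ≤ v.val ∧ v.val < a + 0} = ∅ by ext; simp, indPolyOn_empty,
      pathIndPoly]
  | one =>
    have hv : (⟨a, by omega⟩ : Fin n) ∈ {v : Fin n | a ≤ v.val ∧ v.val < a + 1} := by simp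
    rw [indPolyOn_eq_sub _ hv, Set.sdiff_eq_empty.2 (by simp [Set.subset_def, Fin.ext_iff]; omega),
      Set.sdiff_eq_empty.2 (by simp [Set.subset_def, Fin.ext_iff]; omega), indPolyOn_empty,
      pathIndPoly, mul_one]
  | more m ih₀ ih₁ =>
    have hv : (⟨a + m + 1, by omega⟩ : Fin n) ∈
        {v : Fin n | a ≤ v.val ∧ v.val < a + (m + 2)} := by
      simp; omega
    rw [indPolyOn_eq_sub _ hv, pathIndPoly, ← ih₀ (by omega), ← ih₁ (by omega)]
    congr 3 <;> ext v <;>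
      simp [Fin.ext_iff, cycleGraph_adj_iff_val (show 2 ≤ n by omega)] <;> omega

lemma indPoly_cycleGraph {n : ℕ} (hn : 3 ≤ n) :
    indPoly (SimpleGraph.cycleGraph n) = pathIndPoly (n - 1) - X * pathIndPoly (n - 3) := by
  have h0 : (⟨0, by omega⟩ : Fin n) ∈ Set.univ := Set.mem_univ _
  rw [indPoly, indPolyOn_eq_sub _ h0,
    ← indPolyOn_cycleGraph_arc (n := n) (a := 1) one_pos (n - 1) (by omega),
    ← indPolyOn_cycleGraph_arc (n := n) (a := 2) two_pos (n - 3) (by omega)]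
  congr 3 <;> ext v <;>
    simp [Fin.ext_iff, cycleGraph_adj_iff_val (show 2 ≤ n by omega)] <;> omega

lemma sin_mul_eval_indPoly_cycleGraph {n : ℕ} (hn : 3 ≤ n) {θ z : ℝ}
    (hz : 4 * cos θ ^ 2 * z = 1) :
    sin θ * (2 * cos θ) ^ n * (indPoly (SimpleGraph.cycleGraph n)).eval z =
      2 * cos (n * θ) * sin θ := by
  obtain ⟨m, rfl⟩ : ∃ m, n = m + 3 := ⟨n - 3, by omega⟩
  have h₂ := sin_mul_eval_pathIndPoly hz (m + 2)
  have h₀ := sin_mul_eval_pathIndPoly hz m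
  have hprod : 2 * cos ((m + 3) * θ) * sin θ =
      sin ((m + 4) * θ) - sin ((m + 2) * θ) := by
    rw [show (m + 4) * θ = (m + 3) * θ + θ by ring,
      show (m + 2) * θ = (m + 3) * θ - θ by ring, Real.sin_add, Real.sin_sub]
    ring
  rw [indPoly_cycleGraph hn, Nat.add_sub_cancel, show m + 3 - 1 = m + 2 by omega, eval_sub,
    eval_mul, eval_X]
  push_cast at h₂ ⊢
  rw [show (m : ℝ) + 2 + 2 = m + 4 by ring] at h₂
  linear_combination h₂ - h₀ - hprod - sin θ * (2 * cos θ) ^ (m + 1) *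
    (pathIndPoly m).eval z * hz

lemma eval_indPoly_cycleGraph_eq_zero {n : ℕ} (hn : 3 ≤ n) {θ z : ℝ}
    (hz : 4 * cos θ ^ 2 * z = 1) (hsin : sin θ ≠ 0) (hcos : cos (n * θ) = 0) :
    (indPoly (SimpleGraph.cycleGraph n)).eval z = 0 := by
  have h := sin_mul_eval_indPoly_cycleGraph hn hz
  have hcosθ : cos θ ≠ 0 := by rintro h; simp [h] at hz
  rw [hcos, mul_zero, zero_mul] at h
  simpa [hsin, hcosθ] using h

lemma strictMonoOn_one_div_four_mul_cos_sq :
    StrictMonoOn (fun θ => 1 / (4 * cos θ ^ 2)) (Set.Ico 0 (π / 2)) := by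
  rintro a ⟨ha₀, -⟩ b ⟨-, hb⟩ hab
  have hcb : 0 < cos b := Real.cos_pos_of_mem_Ioo ⟨by linarith, hb⟩
  have hcab : cos b < cos a :=
    Real.cos_lt_cos_of_nonneg_of_le_pi ha₀ (by linarith [Real.pi_pos]) hab
  exact one_div_lt_one_div_of_lt (by positivity) (by nlinarith)

noncomputable def cycleRoot (n k : ℕ) : ℝ :=
  1 / (4 * cos ((2 * k + 1) * π / (2 * n)) ^ 2)

lemma cycleRoot_angle_mem_Ioo {n k : ℕ} (hk : 2 * k + 1 < n) :
    (2 * k + 1) * π / (2 * n) ∈ Set.Ioo 0 (π / 2) := by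
  have hkn : (2 * k + 1 : ℝ) < n := by exact_mod_cast hk
  have hn : (0 : ℝ) < n := by linarith
  constructor
  · positivity
  · rw [div_lt_div_iff₀ (by linarith) two_pos]
    nlinarith [Real.pi_pos]

lemma cycleRoot_strictMonoOn (n : ℕ) : StrictMonoOn (cycleRoot n) {k | 2 * k + 1 < n} := by
  intro j hj k hk hjk
  refine strictMonoOn_one_div_four_mul_cos_sq (Set.Ioo_subset_Ico_self
    (cycleRoot_angle_mem_Ioo hj)) (Set.Ioo_subset_Ico_self (cycleRoot_angle_mem_Ioo hk)) ?_
  have hn : (0 : ℝ) < n := by exact_mod_cast (show 0 < n by simp at hk; omega)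
  gcongr

lemma eval_cycleRoot {n k : ℕ} (hn : 3 ≤ n) (hk : 2 * k + 1 < n) :
    (indPoly (SimpleGraph.cycleGraph n)).eval (cycleRoot n k) = 0 := by
  obtain ⟨hθ₀, hθ⟩ := cycleRoot_angle_mem_Ioo hk
  refine eval_indPoly_cycleGraph_eq_zero hn ?_ (Real.sin_pos_of_pos_of_lt_pi hθ₀
    (by linarith [Real.pi_pos])).ne' (Real.cos_eq_zero_iff.2 ⟨k, ?_⟩)
  · have hcos := (Real.cos_pos_of_mem_Ioo ⟨by linarith, hθ⟩).ne'
    rw [cycleRoot]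
    field_simp
  · have hn : (n : ℝ) ≠ 0 := by positivity
    field_simp
    push_cast
    ring

lemma Polynomial.setOf_isRoot_eq_of_natDegree_le {R : Type*} [CommRing R] [IsDomain R]
    {p : R[X]} {s : Finset R} (hp : p ≠ 0) (hs : ∀ x ∈ s, p.IsRoot x)
    (hdeg : p.natDegree ≤ s.card) : {x | p.IsRoot x} = s := by
  classical
  have hsub : s ⊆ p.roots.toFinset := fun x hx =>
    Multiset.mem_toFinset.2 ((mem_roots hp).2 (hs x hx))
  have hcard : p.roots.toFinset.card ≤ s.card :=
    (Multiset.toFinset_card_le _).trans ((card_roots' p).trans hdeg)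
  rw [Finset.eq_of_subset_of_card_le hsub hcard]
  ext x
  simp [mem_roots hp]

lemma natDegree_indPoly_cycleGraph_le {n : ℕ} (hn : 3 ≤ n) :
    (indPoly (SimpleGraph.cycleGraph n)).natDegree ≤ n / 2 := by
  have h₁ := natDegree_pathIndPoly_le (n - 1)
  have h₃ : (X * pathIndPoly (n - 3)).natDegree ≤ 1 + (n - 3 + 1) / 2 :=
    natDegree_mul_le.trans (by simpa using natDegree_pathIndPoly_le (n - 3))
  rw [indPoly_cycleGraph hn]
  exact (natDegree_sub_le _ _).trans (by omega)

lemma indPoly_cycleGraph_ne_zero {n : ℕ} (hn : 3 ≤ n) :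
    indPoly (SimpleGraph.cycleGraph n) ≠ 0 := fun h => by
  simpa [eval_zero_pathIndPoly] using congrArg (eval 0) ((indPoly_cycleGraph hn).symm.trans h)

lemma Polynomial.aeval_ofReal_eq_zero_iff {p : ℝ[X]} {x : ℝ} :
    aeval (x : ℂ) p = 0 ↔ p.eval x = 0 := by
  rw [← Complex.ofReal_eq_zero]
  exact Eq.congr_left (Polynomial.ofReal_eval p x).symm

lemma setOf_aeval_indPoly_cycleGraph {n : ℕ} (hn : 3 ≤ n) :
    {z : ℂ | aeval z (indPoly (SimpleGraph.cycleGraph n)) = 0} =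
      (fun k => (cycleRoot n k : ℂ)) '' {k | 2 * k + 1 < n} := by
  set p := (indPoly (SimpleGraph.cycleGraph n)).map (algebraMap ℝ ℂ)
  have hinj : Set.InjOn (fun k => (cycleRoot n k : ℂ)) (Finset.range (n / 2)) :=
    Complex.ofReal_injective.comp_injOn
      ((cycleRoot_strictMonoOn n).injOn.mono fun k hk => by simp at hk ⊢; omega)
  have hroots : {z : ℂ | aeval z (indPoly (SimpleGraph.cycleGraph n)) = 0} =
      {z | p.IsRoot z} := by
    ext z
    simp [p, eval_map_algebraMap]
  have himage : (fun k => (cycleRoot n k : ℂ)) '' {k | 2 * k + 1 < n} =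
      ↑((Finset.range (n / 2)).image fun k => (cycleRoot n k : ℂ)) := by
    ext z
    simp only [Set.mem_image, Set.mem_ofPred_eq, Finset.coe_image, Finset.coe_range,
      Set.mem_Iio]
    exact exists_congr fun k => and_congr_left' (by omega)
  rw [hroots, himage]
  refine setOf_isRoot_eq_of_natDegree_le
    ((Polynomial.map_ne_zero_iff (algebraMap ℝ ℂ).injective).2 (indPoly_cycleGraph_ne_zero hn))
    ?_ ?_
  · simp only [Finset.mem_image, Finset.mem_range, forall_exists_index, and_imp]
    rintro _ k hk rfl
    rw [IsRoot, eval_map_algebraMap, aeval_ofReal_eq_zero_iff]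
    exact eval_cycleRoot hn (by omega)
  · rw [natDegree_map_eq_of_injective (algebraMap ℝ ℂ).injective,
      Finset.card_image_of_injOn hinj, Finset.card_range]
    exact natDegree_indPoly_cycleGraph_le hn

/-- For `n ≥ 3`, the set of complex roots of the independence
polynomial of the cycle graph `C_n` is exactly
`{1/(4cos²((2k+1)π/(2n))) : k ∈ ℕ, 2k+1 < n}`.  In particular the smallest root is
`β(C_n) = 1/(4cos²(π/(2n)))`, and for `n ≥ 4` the root of second smallest absolute
value is `1/(4cos²(3π/(2n)))`. -/
theorem indPoly_cycleGraph_roots (n : ℕ) (hn : 3 ≤ n) :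
    ({z : ℂ | aeval z (indPoly (SimpleGraph.cycleGraph n)) = 0} =
      (fun k : ℕ =>
          ((1 / (4 * Real.cos ((2 * k + 1) * Real.pi / (2 * n)) ^ 2) : ℝ) : ℂ)) ''
        {k : ℕ | 2 * k + 1 < n}) ∧
    ((indPoly (SimpleGraph.cycleGraph n)).eval
        (1 / (4 * Real.cos (Real.pi / (2 * n)) ^ 2)) = 0 ∧
      ∀ x : ℝ, (indPoly (SimpleGraph.cycleGraph n)).eval x = 0 →
        1 / (4 * Real.cos (Real.pi / (2 * n)) ^ 2) ≤ x) ∧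
    (4 ≤ n →
      (indPoly (SimpleGraph.cycleGraph n)).eval
          (1 / (4 * Real.cos (3 * Real.pi / (2 * n)) ^ 2)) = 0 ∧
      ∀ z : ℂ, aeval z (indPoly (SimpleGraph.cycleGraph n)) = 0 →
        z ≠ ((1 / (4 * Real.cos (Real.pi / (2 * n)) ^ 2) : ℝ) : ℂ) →
        1 / (4 * Real.cos (3 * Real.pi / (2 * n)) ^ 2) ≤ ‖z‖) := by
  have hroots := setOf_aeval_indPoly_cycleGraph hn
  have hmem : ∀ z, aeval z (indPoly (SimpleGraph.cycleGraph n)) = 0 →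
      ∃ k, 2 * k + 1 < n ∧ (cycleRoot n k : ℂ) = z := fun z hz =>
    (Set.ext_iff.1 hroots z).1 hz
  have hmono := (cycleRoot_strictMonoOn n).monotoneOn
  have h₀ : 1 / (4 * cos (π / (2 * n)) ^ 2) = cycleRoot n 0 := by simp [cycleRoot]
  have h₁ : 1 / (4 * cos (3 * π / (2 * n)) ^ 2) = cycleRoot n 1 := by
    norm_num [cycleRoot]
  refine ⟨hroots, ⟨h₀ ▸ eval_cycleRoot hn (by omega), fun x hx => ?_⟩,
    fun hn₄ => ⟨h₁ ▸ eval_cycleRoot hn (by omega), fun z hz hz₀ => ?_⟩⟩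
  · obtain ⟨k, hk, hxk⟩ := hmem x (aeval_ofReal_eq_zero_iff.2 hx)
    rw [h₀, ← Complex.ofReal_inj.1 hxk]
    exact hmono (by simp; omega) hk (Nat.zero_le k)
  · obtain ⟨k, hk, rfl⟩ := hmem z hz
    have hk₀ : k ≠ 0 := by rintro rfl; exact hz₀ (congrArg _ h₀.symm)
    rw [h₁, Complex.norm_real, Real.norm_of_nonneg (by unfold cycleRoot; positivity)]
    exact hmono (by simp; omega) hk (by omega)
end
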